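/- arXiv:1107.5541 — 6 statements merged into one kernel-verified Lean document; each statement's English description precedes it below -/
import Mathlib

section
/- Any nonzero 2×2 Hermitian positive semidefinite matrix Q with trace at most 1 can be written as Q = x·e₁e₁† + (1−x)·uu†, where e₁ = [1,0]ᵀ, x is a real number with 0 ≤ x < 1, and u is a nonzero 2×1 complex vector with u†u ≤ 1. -/
open Matrix
open scoped ComplexOrder

/-!
Write `Q = !![a, b; b̄, c]` with `a, c ≥ 0` and `|b|² ≤ ac`. If `c > 0`, subtracting `c⁻¹ vv†`, where
`v = (b, c)` is the second column of `Q`, leaves the Schur complement `x = a - |b|²/c` in the corner;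
rescaling `v` to `u = v / √(c(1 - x))` gives `‖u‖² = (|b|² + c²)/(c(1 - x)) ≤ 1`, which unwinds to
`a + c ≤ 1`. If `c = 0`, then `b = 0` and `Q = a e₁e₁†`, so `x = 0`, `u = √a e₁` works.
-/

theorem Matrix.eta_fin_two_eq_smul_add_vecMulVec {K : Type*} [Field K] (a b b' c : K) (hc : c ≠ 0) :
    !![a, b; b', c] = (a - b * b' / c) • !![1, 0; 0, 0] + c⁻¹ • vecMulVec ![b, c] ![b', c] := by
  ext i j
  fin_cases i <;> fin_cases j <;> simp [field]

theorem Matrix.vecMulVec_ofReal_smul_star {n : Type*} (r : ℝ) (v : n → ℂ) :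
    vecMulVec ((r : ℂ) • v) (star ((r : ℂ) • v)) = ((r ^ 2 : ℝ) : ℂ) • vecMulVec v (star v) := by
  rw [star_smul, Complex.star_def, Complex.conj_ofReal, smul_vecMulVec, vecMulVec_smul, smul_smul]
  push_cast; ring_nf

theorem Matrix.star_ofReal_smul_dotProduct {n : Type*} [Fintype n] (r : ℝ) (v : n → ℂ) :
    star ((r : ℂ) • v) ⬝ᵥ ((r : ℂ) • v) = ((r ^ 2 : ℝ) : ℂ) * (star v ⬝ᵥ v) := by
  rw [star_smul, Complex.star_def, Complex.conj_ofReal, smul_dotProduct, dotProduct_smul, smul_smul]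
  push_cast; simp [sq]

theorem Matrix.PosSemidef.exists_eq_fin_two {Q : Matrix (Fin 2) (Fin 2) ℂ} (hQ : Q.PosSemidef) :
    ∃ (a c : ℝ) (b : ℂ), 0 ≤ a ∧ 0 ≤ c ∧ Complex.normSq b ≤ a * c ∧
      Q = !![(a : ℂ), b; star b, (c : ℂ)] := by
  have hdiag (i : Fin 2) : Q i i = (Q i i).re := (Complex.conj_eq_iff_re.mp (hQ.1.apply i i)).symm
  have hherm : Q 1 0 = star (Q 0 1) := (hQ.1.apply 1 0).symm
  refine ⟨(Q 0 0).re, (Q 1 1).re, Q 0 1, (Complex.nonneg_iff.mp hQ.diag_nonneg).1,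
    (Complex.nonneg_iff.mp hQ.diag_nonneg).1, ?_, ?_⟩
  · have hdet := (Complex.nonneg_iff.mp hQ.det_nonneg).1
    rw [det_fin_two, hherm, hdiag 0, hdiag 1] at hdet
    simpa [Complex.normSq_apply, sub_nonneg] using hdet
  · rw [← hdiag, ← hdiag, ← hherm]
    exact eta_fin_two Q

def HasE1Decomposition (Q : Matrix (Fin 2) (Fin 2) ℂ) : Prop :=
  ∃ (x : ℝ) (u : Fin 2 → ℂ), 0 ≤ x ∧ x < 1 ∧ u ≠ 0 ∧ (star u ⬝ᵥ u).re ≤ 1 ∧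
    Q = (x : ℂ) • !![1, 0; 0, 0] + ((1 - x : ℝ) : ℂ) • vecMulVec u (star u)

theorem hasE1Decomposition_diagonal {a : ℝ} (ha : 0 < a) (ha1 : a ≤ 1) :
    HasE1Decomposition !![(a : ℂ), 0; 0, 0] := by
  have hsq : (√a : ℂ) * √a = a := by exact_mod_cast Real.mul_self_sqrt ha.le
  refine ⟨0, ![(√a : ℂ), 0], le_rfl, zero_lt_one, ?_, ?_, ?_⟩
  · simp [Real.sqrt_eq_zero', not_le.mpr ha]
  · simpa [dotProduct, hsq] using ha1
  · ext i j
    fin_cases i <;> fin_cases j <;> simp [vecMulVec_apply, -cons_vecMulVec, hsq]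

theorem hasE1Decomposition_of_pos {a c : ℝ} {b : ℂ} (hc : 0 < c) (hb : Complex.normSq b ≤ a * c)
    (htr : a + c ≤ 1) : HasE1Decomposition !![(a : ℂ), b; star b, (c : ℂ)] := by
  set x := a - Complex.normSq b / c with hx
  have hx0 : 0 ≤ x := sub_nonneg.mpr ((div_le_iff₀ hc).mpr (by linarith))
  have hx1 : x < 1 := by have := div_nonneg (Complex.normSq_nonneg b) hc.le; linarith
  have hr : 0 < c * (1 - x) := mul_pos hc (by linarith)
  set r := (√(c * (1 - x)))⁻¹
  have hr0 : r ≠ 0 := inv_ne_zero (Real.sqrt_pos.mpr hr).ne'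
  have hr2 : r ^ 2 = (c * (1 - x))⁻¹ := by rw [inv_pow, Real.sq_sqrt hr.le]
  have hstar : star ![b, (c : ℂ)] = ![star b, (c : ℂ)] := by ext i; fin_cases i <;> simp
  refine ⟨x, (r : ℂ) • ![b, c], hx0, hx1, ?_, ?_, ?_⟩
  · simp [hr0, hc.ne']
  · have hdot : star ![b, (c : ℂ)] ⬝ᵥ ![b, (c : ℂ)] = ((Complex.normSq b + c ^ 2 : ℝ) : ℂ) := by
      simp [dotProduct, Complex.normSq_eq_conj_mul_self, sq]
    have hcx : c * x = c * a - Complex.normSq b := by rw [hx]; field_simp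
    rw [star_ofReal_smul_dotProduct, hdot, ← Complex.ofReal_mul, Complex.ofReal_re, hr2,
      inv_mul_le_one₀ hr]
    calc Complex.normSq b + c ^ 2 ≤ Complex.normSq b + c * (1 - a) := by
          rw [sq]; gcongr; linarith
      _ = c * (1 - x) := by linear_combination hcx
  · have hx' : (x : ℂ) = a - b * star b / c := by simp [hx, Complex.mul_conj]
    have hcoef : ((1 - x : ℝ) : ℂ) * ((c * (1 - x))⁻¹ : ℝ) = (c : ℂ)⁻¹ := by
      have h1x : 1 - x ≠ 0 := by linarith
      exact_mod_cast (by field_simp : (1 - x) * (c * (1 - x))⁻¹ = c⁻¹)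
    rw [vecMulVec_ofReal_smul_star, hr2, smul_smul, hcoef, hstar, hx',
      eta_fin_two_eq_smul_add_vecMulVec _ _ _ _ (Complex.ofReal_ne_zero.mpr hc.ne')]

theorem stmt_0 (Q : Matrix (Fin 2) (Fin 2) ℂ)
    (hQ : Q.PosSemidef) (hQ0 : Q ≠ 0) (htr : Q.trace.re ≤ 1) :
    ∃ (x : ℝ) (u : Fin 2 → ℂ), 0 ≤ x ∧ x < 1 ∧ u ≠ 0 ∧ (star u ⬝ᵥ u).re ≤ 1 ∧
      Q = (x : ℂ) • !![1, 0; 0, 0] + ((1 - x : ℝ) : ℂ) • vecMulVec u (star u) := by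
  obtain ⟨a, c, b, ha, hc, hb, rfl⟩ := hQ.exists_eq_fin_two
  show HasE1Decomposition _
  have htr : a + c ≤ 1 := by simpa [trace_fin_two] using htr
  rcases hc.eq_or_lt with rfl | hc
  · obtain rfl : b = 0 := Complex.normSq_eq_zero.mp (by linarith [b.normSq_nonneg])
    obtain ha | rfl := ha.lt_or_eq
    · simpa only [star_zero, Complex.ofReal_zero] using
        hasE1Decomposition_diagonal ha (by simpa using htr)
    · simp [← Matrix.ext_iff, Fin.forall_fin_two] at hQ0
  · exact hasE1Decomposition_of_pos hc hb htr
end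

section
/- Let S_R, S_E be n×n Hermitian positive semidefinite matrices. The supremum of log det(I + Q S_R) − log det(I + Q S_E) over Hermitian Q ⪰ 0 with Tr(Q) ≤ 1 is strictly positive if and only if S_R − S_E has at least one positive eigenvalue. -/
/-!
By Sylvester's identity `det (1 + Q S) = det (1 + √Q S √Q)`, so for `Q ⪰ 0` the value
`det (1 + Q S)` is a real number `≥ 1` for every `S ⪰ 0`, and it is monotone in `S` for the
Loewner order: `1 + Z = (1 + X) (1 + (1 + X)⁻¹ (Z - X))`. Hence if `S_R - S_E` has no positive
eigenvalue, i.e. `S_R ⪯ S_E`, every rate is `≤ 0`. Conversely, for a unit eigenvector `v` of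
`S_R - S_E` with positive eigenvalue, `Q = v v*` gives `det (1 + Q S) = 1 + v* S v` and a positive
rate. The supremum is a true one because the rates are bounded by `tr S_R`: `S ⪯ (tr S) • 1` and
`det (1 + P) ≤ exp (tr P)`.
-/

open Matrix
open scoped ComplexOrder

namespace Matrix

section
open scoped MatrixOrder
variable {𝕜 ι : Type*} [RCLike 𝕜] [Fintype ι] [DecidableEq ι]

lemma IsHermitian.le_smul_one_of_eigenvalues_le {A : Matrix ι ι 𝕜} (hA : A.IsHermitian) {c : ℝ}
    (h : ∀ i, hA.eigenvalues i ≤ c) : A ≤ c • (1 : Matrix ι ι 𝕜) := by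
  rw [← Algebra.algebraMap_eq_smul_one]
  refine le_algebraMap_of_spectrum_le (fun x hx => ?_) hA.isSelfAdjoint
  obtain ⟨i, rfl⟩ := hA.spectrum_real_eq_range_eigenvalues ▸ hx
  exact h i

lemma PosSemidef.le_re_trace_smul_one {S : Matrix ι ι 𝕜} (hS : S.PosSemidef) :
    S ≤ RCLike.re S.trace • (1 : Matrix ι ι 𝕜) := by
  refine hS.isHermitian.le_smul_one_of_eigenvalues_le fun i => ?_
  rw [hS.isHermitian.trace_eq_sum_eigenvalues, ← RCLike.ofReal_sum, RCLike.ofReal_re]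
  exact Finset.single_le_sum (fun j _ => hS.eigenvalues_nonneg j) (Finset.mem_univ i)

lemma PosSemidef.one_le_eigenvalues_one_add {P : Matrix ι ι 𝕜} (hP : P.PosSemidef)
    (h : (1 + P).IsHermitian) (i : ι) : 1 ≤ h.eigenvalues i :=
  (CFC.one_le_iff (1 + P) h.isSelfAdjoint).1 (le_add_of_nonneg_right hP.nonneg) _
    (h.eigenvalues_mem_spectrum_real i)

lemma PosSemidef.one_le_det_one_add {P : Matrix ι ι 𝕜} (hP : P.PosSemidef) :
    1 ≤ (1 + P).det := by
  have h := (PosSemidef.one.add hP).isHermitian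
  rw [h.det_eq_prod_eigenvalues, ← RCLike.ofReal_prod, ← RCLike.ofReal_one,
    RCLike.ofReal_le_ofReal]
  exact Finset.one_le_prod fun i _ => hP.one_le_eigenvalues_one_add h i

lemma PosSemidef.re_det_one_add_le_exp_re_trace {P : Matrix ι ι 𝕜} (hP : P.PosSemidef) :
    RCLike.re (1 + P).det ≤ Real.exp (RCLike.re P.trace) := by
  have h := (PosSemidef.one.add hP).isHermitian
  have htr : RCLike.re P.trace = ∑ i, (h.eigenvalues i - 1) := by
    have := congrArg RCLike.re h.trace_eq_sum_eigenvalues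
    simp only [trace_add, trace_one, map_add, map_sum, RCLike.ofReal_re] at this
    simp [Finset.sum_sub_distrib, ← this]
  rw [h.det_eq_prod_eigenvalues, ← RCLike.ofReal_prod, RCLike.ofReal_re, htr, Real.exp_sum]
  refine Finset.prod_le_prod (fun i _ => ?_) fun i _ => ?_
  · linarith [hP.one_le_eigenvalues_one_add h i]
  · linarith [Real.add_one_le_exp (h.eigenvalues i - 1)]

lemma det_one_add_mul_eq_det_one_add_sqrt_mul_mul_sqrt {Q : Matrix ι ι 𝕜} (hQ : Q.PosSemidef)
    (S : Matrix ι ι 𝕜) : (1 + Q * S).det = (1 + CFC.sqrt Q * S * CFC.sqrt Q).det := by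
  nth_rw 1 [← CFC.sqrt_mul_sqrt_self Q hQ.nonneg, mul_assoc, det_one_add_mul_comm]

lemma PosSemidef.sqrt_mul_mul_sqrt {S : Matrix ι ι 𝕜} (hS : S.PosSemidef) (Q : Matrix ι ι 𝕜) :
    (CFC.sqrt Q * S * CFC.sqrt Q).PosSemidef :=
  (conjugate_nonneg_of_nonneg hS.nonneg (CFC.sqrt_nonneg Q)).posSemidef

lemma PosSemidef.one_le_det_one_add_mul {Q S : Matrix ι ι 𝕜} (hQ : Q.PosSemidef)
    (hS : S.PosSemidef) : 1 ≤ (1 + Q * S).det := by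
  rw [det_one_add_mul_eq_det_one_add_sqrt_mul_mul_sqrt hQ]
  exact (hS.sqrt_mul_mul_sqrt Q).one_le_det_one_add

lemma PosSemidef.one_le_re_det_one_add_mul {Q S : Matrix ι ι 𝕜} (hQ : Q.PosSemidef)
    (hS : S.PosSemidef) : 1 ≤ RCLike.re (1 + Q * S).det := by
  simpa using RCLike.re_le_re (hQ.one_le_det_one_add_mul hS)

lemma PosSemidef.det_one_add_le_of_le {X Z : Matrix ι ι 𝕜} (hX : X.PosSemidef) (hXZ : X ≤ Z) :
    (1 + X).det ≤ (1 + Z).det := by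
  have hM : (1 + X).PosDef := PosDef.one.add_posSemidef hX
  have hfactor : 1 + Z = (1 + X) * (1 + (1 + X)⁻¹ * (Z - X)) := by
    rw [mul_add, mul_one, mul_nonsing_inv_cancel_left _ _ (isUnit_iff_isUnit_det _ |>.1 hM.isUnit)]
    abel
  rw [hfactor, det_mul]
  exact le_mul_of_one_le_right hM.posSemidef.det_nonneg
    (hM.inv.posSemidef.one_le_det_one_add_mul hXZ)

lemma PosSemidef.det_one_add_mul_le_of_le {Q A B : Matrix ι ι 𝕜} (hQ : Q.PosSemidef)
    (hA : A.PosSemidef) (hAB : A ≤ B) : (1 + Q * A).det ≤ (1 + Q * B).det := by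
  rw [det_one_add_mul_eq_det_one_add_sqrt_mul_mul_sqrt hQ,
    det_one_add_mul_eq_det_one_add_sqrt_mul_mul_sqrt hQ]
  exact (hA.sqrt_mul_mul_sqrt Q).det_one_add_le_of_le
    ((CFC.sqrt_nonneg Q).isSelfAdjoint.conjugate_le_conjugate hAB)

lemma PosSemidef.log_re_det_one_add_mul_le {Q S : Matrix ι ι 𝕜} (hQ : Q.PosSemidef)
    (hS : S.PosSemidef) :
    Real.log (RCLike.re (1 + Q * S).det) ≤ RCLike.re S.trace * RCLike.re Q.trace := by
  set c := RCLike.re S.trace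
  have hc : 0 ≤ c := by simpa using RCLike.re_le_re hS.trace_nonneg
  have hmono := hQ.det_one_add_mul_le_of_le hS hS.le_re_trace_smul_one
  rw [mul_smul_comm, mul_one] at hmono
  have hpos : 0 < RCLike.re (1 + Q * S).det := one_pos.trans_le (hQ.one_le_re_det_one_add_mul hS)
  calc Real.log (RCLike.re (1 + Q * S).det)
      ≤ Real.log (RCLike.re (1 + c • Q).det) :=
        Real.log_le_log hpos (RCLike.re_le_re hmono)
    _ ≤ RCLike.re (c • Q).trace :=
        (Real.log_le_iff_le_exp (hpos.trans_le (RCLike.re_le_re hmono))).2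
          (hQ.smul hc).re_det_one_add_le_exp_re_trace
    _ = c * RCLike.re Q.trace := by rw [trace_smul, RCLike.smul_re]

end

lemma det_one_add_vecMulVec_mul {ι R : Type*} [Fintype ι] [DecidableEq ι] [CommRing R]
    (u v : ι → R) (S : Matrix ι ι R) : (1 + vecMulVec u v * S).det = 1 + v ⬝ᵥ (S *ᵥ u) := by
  rw [vecMulVec_mul, vecMulVec_eq Unit, det_one_add_replicateCol_mul_replicateRow,
    dotProduct_mulVec]

end Matrix

lemma EuclideanSpace.dotProduct_star_self_of_norm_eq_one {𝕜 ι : Type*} [RCLike 𝕜] [Fintype ι]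
    {v : EuclideanSpace 𝕜 ι} (hv : ‖v‖ = 1) : v.ofLp ⬝ᵥ star v.ofLp = 1 := by
  have := inner_eq_star_dotProduct v v
  rw [inner_self_eq_norm_sq_to_K, hv] at this
  simpa using this.symm

section SecrecyRate
open scoped MatrixOrder
variable {ι : Type*} [Fintype ι] [DecidableEq ι]

noncomputable def secrecyRate (S_R S_E Q : Matrix ι ι ℂ) : ℝ :=
  Real.log (1 + Q * S_R).det.re - Real.log (1 + Q * S_E).det.re

lemma secrecyRate_le_re_trace {S_R S_E Q : Matrix ι ι ℂ} (hR : S_R.PosSemidef)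
    (hE : S_E.PosSemidef) (hQ : Q.PosSemidef) (htr : Q.trace.re ≤ 1) :
    secrecyRate S_R S_E Q ≤ S_R.trace.re := by
  have hR0 : 0 ≤ S_R.trace.re := by simpa using Complex.re_le_re hR.trace_nonneg
  have hE0 : 0 ≤ Real.log (1 + Q * S_E).det.re :=
    Real.log_nonneg (hQ.one_le_re_det_one_add_mul hE)
  have hRle : Real.log (1 + Q * S_R).det.re ≤ S_R.trace.re * Q.trace.re :=
    hQ.log_re_det_one_add_mul_le hR
  rw [secrecyRate]
  linarith [mul_le_of_le_one_right hR0 htr]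

lemma secrecyRate_nonpos {S_R S_E Q : Matrix ι ι ℂ} (hR : S_R.PosSemidef)
    (hD : (S_R - S_E).IsHermitian) (h : ∀ i, hD.eigenvalues i ≤ 0) (hQ : Q.PosSemidef) :
    secrecyRate S_R S_E Q ≤ 0 := by
  have hRE : S_R ≤ S_E := by simpa using hD.le_smul_one_of_eigenvalues_le h
  exact sub_nonpos.2 <| Real.log_le_log (one_pos.trans_le (hQ.one_le_re_det_one_add_mul hR))
    (Complex.re_le_re (hQ.det_one_add_mul_le_of_le hR hRE))

lemma exists_secrecyRate_pos {S_R S_E : Matrix ι ι ℂ} (hE : S_E.PosSemidef)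
    (hD : (S_R - S_E).IsHermitian) (h : ∃ i, 0 < hD.eigenvalues i) :
    ∃ Q : Matrix ι ι ℂ, Q.PosSemidef ∧ Q.trace.re ≤ 1 ∧ 0 < secrecyRate S_R S_E Q := by
  obtain ⟨i, hi⟩ := h
  set v := (hD.eigenvectorBasis i).ofLp
  have hv : v ⬝ᵥ star v = 1 :=
    EuclideanSpace.dotProduct_star_self_of_norm_eq_one (hD.eigenvectorBasis.orthonormal.1 i)
  refine ⟨vecMulVec v (star v), posSemidef_vecMulVec_self_star v, by simp [trace_vecMulVec, hv], ?_⟩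
  have heig : hD.eigenvalues i = (star v ⬝ᵥ S_R *ᵥ v).re - (star v ⬝ᵥ S_E *ᵥ v).re := by
    simpa [sub_mulVec, dotProduct_sub] using hD.eigenvalues_eq i
  have hE0 : 0 ≤ (star v ⬝ᵥ S_E *ᵥ v).re := hE.re_dotProduct_nonneg v
  rw [secrecyRate, det_one_add_vecMulVec_mul, det_one_add_vecMulVec_mul, sub_pos, Complex.add_re,
    Complex.add_re, Complex.one_re]
  exact Real.log_lt_log (by linarith) (by linarith)

end SecrecyRate

theorem stmt_6 {n : ℕ} (S_R S_E : Matrix (Fin n) (Fin n) ℂ)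
    (hR : S_R.PosSemidef) (hE : S_E.PosSemidef) :
    0 < sSup {c : ℝ | ∃ Q : Matrix (Fin n) (Fin n) ℂ, Q.PosSemidef ∧ Q.trace.re ≤ 1 ∧
          c = Real.log ((1 + Q * S_R).det.re) - Real.log ((1 + Q * S_E).det.re)}
      ↔ ∃ i, 0 < (hR.isHermitian.sub hE.isHermitian).eigenvalues i := by
  constructor
  · intro hpos
    by_contra! hD
    exact hpos.not_ge <| Real.sSup_nonpos fun _ ⟨Q, hQ, _, hc⟩ => hc ▸ secrecyRate_nonpos hR _ hD hQ
  · intro h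
    obtain ⟨Q, hQ, htr, hpos⟩ := exists_secrecyRate_pos hE _ h
    refine hpos.trans_le (le_csSup ⟨S_R.trace.re, ?_⟩ ⟨Q, hQ, htr, rfl⟩)
    rintro _ ⟨Q', hQ', htr', rfl⟩
    exact secrecyRate_le_re_trace hR hE hQ' htr'
end

section
/- Let S be the 2×2 Hermitian matrix [[a, b],[b̄, c]] with a, c ≥ 0 and ac ≥ |b|², let e₁ = [1,0]ᵀ, e₂ = [0,1]ᵀ, and let Q = x e₁e₁† + (1−x) uu† with 0 ≤ x < 1 and u ∈ ℂ². Then det(I + QS) = 1 + x·a + (1−x)·u†(S + x·det(S)·e₂e₂†)u. -/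
/-!
Write `Q S` as a sum of two rank-one matrices `x e₁ (e₁ᵀ S) + (1 - x) u (u† S)`. The
Weinstein–Aronszajn identity `det (1 + A B) = det (1 + B A)` turns `det (1 + Q S)` into a
`2 × 2` determinant of dot products, and its cross term `x (1 - x) (u† S e₁) (e₁ᵀ S u)` is
absorbed by the identity `a S - S e₁ e₁ᵀ S = det S • e₂ e₂ᵀ`.
-/

open Matrix

namespace Matrix

variable {R n : Type*} [CommRing R]

theorem det_one_add_vecMulVec_add_vecMulVec [Fintype n] [DecidableEq n] (c₁ r₁ c₂ r₂ : n → R) :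
    det (1 + vecMulVec c₁ r₁ + vecMulVec c₂ r₂)
      = (1 + r₁ ⬝ᵥ c₁) * (1 + r₂ ⬝ᵥ c₂) - (r₁ ⬝ᵥ c₂) * (r₂ ⬝ᵥ c₁) := by
  have hfactor : vecMulVec c₁ r₁ + vecMulVec c₂ r₂ = (of ![c₁, c₂])ᵀ * of ![r₁, r₂] := by
    ext i j
    simp [mul_apply, Fin.sum_univ_two, vecMulVec_apply]
  rw [add_assoc, hfactor, det_one_add_mul_comm, det_fin_two]
  simp [vecMul, dotProduct, mul_comm]

theorem smul_sub_mul_mul_eq_det_smul_fin_two (S : Matrix (Fin 2) (Fin 2) R) :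
    S 0 0 • S - S * !![1, 0; 0, 0] * S = S.det • !![0, 0; 0, 1] := by
  rw [S.eta_fin_two, det_fin_two_of]
  ext i j
  fin_cases i <;> fin_cases j <;> simp <;> ring

theorem det_one_add_smul_add_smul_vecMulVec_mul (S : Matrix (Fin 2) (Fin 2) R) (x y : R)
    (u v : Fin 2 → R) :
    det (1 + (x • !![1, 0; 0, 0] + y • vecMulVec u v) * S)
      = 1 + x * S 0 0 + y * (v ⬝ᵥ (S + (x * S.det) • !![0, 0; 0, 1]) *ᵥ u) := by
  set e : Fin 2 → R := Pi.single 0 1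
  have he : !![(1 : R), 0; 0, 0] = vecMulVec e e := by
    ext i j
    fin_cases i <;> fin_cases j <;> simp [e, vecMulVec_apply]
  have hQS : (x • !![1, 0; 0, 0] + y • vecMulVec u v) * S
      = vecMulVec (x • e) (e ᵥ* S) + vecMulVec (y • u) (v ᵥ* S) := by
    rw [he, add_mul, smul_mul, smul_mul, vecMulVec_mul, vecMulVec_mul, smul_vecMulVec,
      smul_vecMulVec]
  have hdet : (x * S.det) • !![(0 : R), 0; 0, 1]
      = x • (S 0 0 • S - vecMulVec (S *ᵥ e) (e ᵥ* S)) := by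
    rw [mul_smul, ← smul_sub_mul_mul_eq_det_smul_fin_two, he, mul_vecMulVec, vecMulVec_mul]
  have hSe : e ᵥ* S ⬝ᵥ e = S 0 0 := by simp [e, dotProduct_single]
  rw [hQS, ← add_assoc, det_one_add_vecMulVec_add_vecMulVec, hdet]
  simp only [add_mulVec, smul_mulVec, sub_mulVec, vecMulVec_mulVec, op_smul_eq_smul,
    dotProduct_add, dotProduct_sub, dotProduct_smul, dotProduct_mulVec, smul_eq_mul, hSe]
  ring

end Matrix

theorem stmt_13_general (a c x : ℝ) (b : ℂ) (u : Fin 2 → ℂ) :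
    (1 + ((x : ℂ) • !![1, 0; 0, 0] + ((1 - x : ℝ) : ℂ) • vecMulVec u (star u))
        * !![(a : ℂ), b; star b, (c : ℂ)]).det
      = 1 + (x : ℂ) * (a : ℂ)
          + ((1 - x : ℝ) : ℂ) *
            (star u ⬝ᵥ (!![(a : ℂ), b; star b, (c : ℂ)]
              + ((x : ℂ) * !![(a : ℂ), b; star b, (c : ℂ)].det) • !![0, 0; 0, 1]) *ᵥ u) :=
  det_one_add_smul_add_smul_vecMulVec_mul _ _ _ _ _

theorem stmt_13 (a c x : ℝ) (b : ℂ) (u : Fin 2 → ℂ)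
    (ha : 0 ≤ a) (hc : 0 ≤ c) (hb : Complex.normSq b ≤ a * c)
    (hx0 : 0 ≤ x) (hx1 : x < 1) :
    (1 + ((x : ℂ) • !![1, 0; 0, 0] + ((1 - x : ℝ) : ℂ) • vecMulVec u (star u))
        * !![(a : ℂ), b; star b, (c : ℂ)]).det
      = 1 + (x : ℂ) * (a : ℂ)
          + ((1 - x : ℝ) : ℂ) *
            (star u ⬝ᵥ (!![(a : ℂ), b; star b, (c : ℂ)]
              + ((x : ℂ) * !![(a : ℂ), b; star b, (c : ℂ)].det) • !![0, 0; 0, 1]) *ᵥ u) :=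
  stmt_13_general a c x b u
end

section
/- If S_R − S_E ⪯ 0 (i.e., S_R − S_E has no positive eigenvalue), then for every Hermitian Q ⪰ 0, log det(I + QS_R) − log det(I + QS_E) ≤ 0. -/
/-!
With `s = √Q`, Sylvester's identity gives `det (1 + Q S) = det (1 + s S s)`, and conjugation by `s`
preserves the Loewner order, so it suffices that `det` is monotone on positive semidefinite
matrices. For `A` invertible this follows from `B = √A (1 + C) √A`, where
`C = √A⁻¹ (B - A) √A⁻¹ ⪰ 0` has `det (1 + C) = ∏ (1 + λᵢ) ≥ 1`.
-/

open Matrix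
open scoped ComplexOrder MatrixOrder

namespace Matrix.PosSemidef

variable {n 𝕜 : Type*} [Fintype n] [DecidableEq n] [RCLike 𝕜]

theorem one_le_det_one_add_s17 {P : Matrix n n 𝕜} (hP : P.PosSemidef) : 1 ≤ (1 + P).det := by
  have hdiag : 1 + P = Unitary.conjStarAlgAut 𝕜 _ hP.1.eigenvectorUnitary
      (diagonal fun i ↦ 1 + (hP.1.eigenvalues i : 𝕜)) := by
    conv_lhs => rw [hP.1.spectral_theorem]
    rw [← map_one (Unitary.conjStarAlgAut 𝕜 _ hP.1.eigenvectorUnitary), ← map_add, ← diagonal_one,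
      diagonal_add]
    rfl
  rw [hdiag, Unitary.conjStarAlgAut_apply, det_mul_comm, ← mul_assoc,
    Unitary.star_mul_self_of_mem hP.1.eigenvectorUnitary.2, one_mul, det_diagonal]
  exact Finset.one_le_prod fun i _ ↦
    le_add_of_nonneg_right (RCLike.ofReal_nonneg.mpr (hP.eigenvalues_nonneg i))

theorem det_le_det {A B : Matrix n n 𝕜} (hA : A.PosSemidef) (hAB : (B - A).PosSemidef) :
    A.det ≤ B.det := by
  by_cases hdet : A.det = 0
  · have hB : B.PosSemidef := by simpa using hA.add hAB
    exact hdet ▸ hB.det_nonneg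
  set R := CFC.sqrt A
  have hR : R.PosSemidef := (CFC.sqrt_nonneg A).posSemidef
  have hRR : R * R = A := CFC.sqrt_mul_sqrt_self A hA.nonneg
  have hRunit : IsUnit R.det := by
    refine isUnit_iff_ne_zero.mpr fun h ↦ hdet ?_
    rw [← hRR, det_mul, h, zero_mul]
  set C := R⁻¹ * (B - A) * R⁻¹
  have hC : C.PosSemidef := by
    simpa [hR.1.inv.eq] using hAB.mul_mul_conjTranspose_same R⁻¹
  have hB : B = R * (1 + C) * R := by
    rw [mul_add, add_mul, mul_one, hRR, ← mul_assoc, ← mul_assoc, mul_nonsing_inv R hRunit,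
      one_mul, mul_assoc, nonsing_inv_mul R hRunit, mul_one, add_sub_cancel]
  calc A.det ≤ A.det * (1 + C).det := le_mul_of_one_le_right hA.det_nonneg hC.one_le_det_one_add_s17
    _ = B.det := by rw [hB, det_mul, det_mul, ← hRR, det_mul]; ring

theorem det_one_add_mul_eq_det_one_add_sqrt_mul_mul_sqrt {Q : Matrix n n 𝕜} (hQ : Q.PosSemidef)
    (S : Matrix n n 𝕜) :
    (1 + Q * S).det = (1 + CFC.sqrt Q * S * CFC.sqrt Q).det := by
  conv_lhs => rw [← CFC.sqrt_mul_sqrt_self Q hQ.nonneg, mul_assoc, det_one_add_mul_comm]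

end Matrix.PosSemidef

theorem stmt_17_general {n : ℕ} (S_R S_E : Matrix (Fin n) (Fin n) ℂ)
    (hR : S_R.PosSemidef)
    (hle : (S_E - S_R).PosSemidef) :
    ∀ Q : Matrix (Fin n) (Fin n) ℂ, Q.PosSemidef →
      Real.log ((1 + Q * S_R).det.re) - Real.log ((1 + Q * S_E).det.re) ≤ 0 := by
  intro Q hQ
  set s := CFC.sqrt Q
  have hs : sᴴ = s := (CFC.sqrt_nonneg Q).posSemidef.1.eq
  have hPosDef : (1 + s * S_R * s).PosDef :=
    PosDef.one.add_posSemidef (by simpa [hs] using hR.mul_mul_conjTranspose_same s)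
  have hLoewner : ((1 + s * S_E * s) - (1 + s * S_R * s)).PosSemidef := by
    simpa [hs, mul_sub, sub_mul] using hle.mul_mul_conjTranspose_same s
  have hdet := hPosDef.posSemidef.det_le_det hLoewner
  rw [hQ.det_one_add_mul_eq_det_one_add_sqrt_mul_mul_sqrt,
    hQ.det_one_add_mul_eq_det_one_add_sqrt_mul_mul_sqrt, sub_nonpos]
  exact Real.log_le_log (Complex.lt_def.mp hPosDef.det_pos).1 (Complex.le_def.mp hdet).1

theorem stmt_17 {n : ℕ} (S_R S_E : Matrix (Fin n) (Fin n) ℂ)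
    (hR : S_R.PosSemidef) (hE : S_E.PosSemidef)
    (hle : (S_E - S_R).PosSemidef) :
    ∀ Q : Matrix (Fin n) (Fin n) ℂ, Q.PosSemidef →
      Real.log ((1 + Q * S_R).det.re) - Real.log ((1 + Q * S_E).det.re) ≤ 0 :=
  stmt_17_general S_R S_E hR hle
end

section
/- For 2×2 Hermitian PSD matrices S_R, S_E with entries a₁, b₁, c₁ and a₂, b₂, c₂ respectively, define f₁(x) = p₁x² + p₂x + p₃, f₂(x) = q₁x² + q₂x + q₃, f₃(x) = q₄x² + q₅x + q₆ with coefficients p₁ = −b₁*b₂ − b₁b₂* − (1+a₁)(a₂c₂−|b₂|²) − (1+a₂)(a₁c₁−|b₁|²), p₂ = 2b₁*b₂ + 2b₁b₂* + (1+a₁)(a₂−c₂+a₂c₂−|b₂|²) + (1+a₂)(a₁−c₁+a₁c₁−|b₁|²), p₃ = (1+a₁)(1+c₂) + (1+a₂)(1+c₁) − b₁*b₂ − b₁b₂*, q₁ = −a₂(c₂+a₂c₂−|b₂|²), q₂ = a₂−c₂+a₂²+|b₂|²+a₂(a₂c₂−|b₂|²), q₃ = 1+a₂+c₂+a₂c₂−|b₂|²,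 and q₄, q₅, q₆ analogously with subscript 1. Then Tr(G₂(x)⁻¹G₁(x)) = f₁(x)/f₂(x) and det(G₂(x)⁻¹G₁(x)) = f₃(x)/f₂(x), where G₁(x) = (1+xa₁)I + (1−x)(S_R + x det(S_R)e₂e₂†) and G₂(x) = (1+xa₂)I + (1−x)(S_E + x det(S_E)e₂e₂†). -/
/-! Since `G₂⁻¹ = (det G₂)⁻¹ • adj G₂`, the trace and determinant of `G₂⁻¹ G₁` are
`tr (adj G₂ G₁) / det G₂` and `det G₁ / det G₂`. The entries of `G(x)` are
`[[1 + a, (1 - x) b], [(1 - x) b*, 1 + x a + (1 - x) (c + x det S)]]`, so numerators and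
denominator are quadratics in `x`, computed by a ring identity in the entries; `|b|² = b b*`
and `2 Re (b₁* b₂) = b₁* b₂ + b₁ b₂*` translate them into the stated coefficients. -/

open Matrix

namespace Matrix

variable {n K : Type*} [Fintype n] [DecidableEq n] [Field K]

theorem trace_inv_mul_eq_div (A B : Matrix n n K) :
    (B⁻¹ * A).trace = (B.adjugate * A).trace / B.det := by
  rw [inv_def, Ring.inverse_eq_inv', smul_mul, trace_smul, smul_eq_mul, inv_mul_eq_div]

theorem det_inv_mul_eq_div (A B : Matrix n n K) : (B⁻¹ * A).det = A.det / B.det := by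
  rw [det_mul, det_nonsing_inv, Ring.inverse_eq_inv', inv_mul_eq_div]

end Matrix

section TwoByTwo

variable {R : Type*} [CommRing R]

/-- The matrix `G(x)` of the paper for `S = !![a, b; b', c]`, with its entries expanded. -/
def gMatrix (a b b' c x : R) : Matrix (Fin 2) (Fin 2) R :=
  !![1 + a, (1 - x) * b; (1 - x) * b', 1 + x * a + (1 - x) * (c + x * (a * c - b * b'))]

theorem smul_one_add_sub_smul_add_det_smul_eq_gMatrix (a b b' c x : R) :
    (1 + x * a) • (1 : Matrix (Fin 2) (Fin 2) R)
        + (1 - x) • (!![a, b; b', c] + (x * !![a, b; b', c].det) • !![0, 0; 0, 1])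
      = gMatrix a b b' c x := by
  ext i j
  fin_cases i <;> fin_cases j <;> simp [gMatrix, det_fin_two_of]; ring

theorem det_gMatrix (a b b' c x : R) :
    (gMatrix a b b' c x).det
      = -a * (c + (a * c - b * b')) * x ^ 2
        + (a - c + a ^ 2 + b * b' + a * (a * c - b * b')) * x + (1 + a + c + (a * c - b * b')) := by
  rw [gMatrix, det_fin_two_of]; ring

theorem trace_adjugate_gMatrix_mul_gMatrix (a₁ b₁ b₁' c₁ a₂ b₂ b₂' c₂ x : R) :
    ((gMatrix a₂ b₂ b₂' c₂ x).adjugate * gMatrix a₁ b₁ b₁' c₁ x).trace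
      = (-(b₁' * b₂ + b₁ * b₂') - (1 + a₁) * (a₂ * c₂ - b₂ * b₂')
            - (1 + a₂) * (a₁ * c₁ - b₁ * b₁')) * x ^ 2
        + (2 * (b₁' * b₂ + b₁ * b₂') + (1 + a₁) * (a₂ - c₂ + a₂ * c₂ - b₂ * b₂')
            + (1 + a₂) * (a₁ - c₁ + a₁ * c₁ - b₁ * b₁')) * x
        + ((1 + a₁) * (1 + c₂) + (1 + a₂) * (1 + c₁) - (b₁' * b₂ + b₁ * b₂')) := by
  rw [gMatrix, gMatrix, adjugate_fin_two_of, mul_fin_two, trace_fin_two_of]; ring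

end TwoByTwo

theorem stmt_18_general (a₁ c₁ a₂ c₂ x : ℝ) (b₁ b₂ : ℂ) :
    let S_R : Matrix (Fin 2) (Fin 2) ℂ := !![(a₁ : ℂ), b₁; star b₁, (c₁ : ℂ)]
    let S_E : Matrix (Fin 2) (Fin 2) ℂ := !![(a₂ : ℂ), b₂; star b₂, (c₂ : ℂ)]
    let G₁ : Matrix (Fin 2) (Fin 2) ℂ :=
      (1 + (x : ℂ) * a₁) • 1 + ((1 - x : ℝ) : ℂ) • (S_R + ((x : ℂ) * S_R.det) • !![0, 0; 0, 1])
    let G₂ : Matrix (Fin 2) (Fin 2) ℂ :=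
      (1 + (x : ℂ) * a₂) • 1 + ((1 - x : ℝ) : ℂ) • (S_E + ((x : ℂ) * S_E.det) • !![0, 0; 0, 1])
    let p₁ : ℝ := -(2 * ((starRingEnd ℂ) b₁ * b₂).re)
      - (1 + a₁) * (a₂ * c₂ - Complex.normSq b₂) - (1 + a₂) * (a₁ * c₁ - Complex.normSq b₁)
    let p₂ : ℝ := 2 * (2 * ((starRingEnd ℂ) b₁ * b₂).re)
      + (1 + a₁) * (a₂ - c₂ + a₂ * c₂ - Complex.normSq b₂)
      + (1 + a₂) * (a₁ - c₁ + a₁ * c₁ - Complex.normSq b₁)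
    let p₃ : ℝ := (1 + a₁) * (1 + c₂) + (1 + a₂) * (1 + c₁) - 2 * ((starRingEnd ℂ) b₁ * b₂).re
    let q₁ : ℝ := -a₂ * (c₂ + a₂ * c₂ - Complex.normSq b₂)
    let q₂ : ℝ := a₂ - c₂ + a₂ ^ 2 + Complex.normSq b₂ + a₂ * (a₂ * c₂ - Complex.normSq b₂)
    let q₃ : ℝ := 1 + a₂ + c₂ + a₂ * c₂ - Complex.normSq b₂
    let q₄ : ℝ := -a₁ * (c₁ + a₁ * c₁ - Complex.normSq b₁)
    let q₅ : ℝ := a₁ - c₁ + a₁ ^ 2 + Complex.normSq b₁ + a₁ * (a₁ * c₁ - Complex.normSq b₁)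
    let q₆ : ℝ := 1 + a₁ + c₁ + a₁ * c₁ - Complex.normSq b₁
    let f₁ : ℝ := p₁ * x ^ 2 + p₂ * x + p₃
    let f₂ : ℝ := q₁ * x ^ 2 + q₂ * x + q₃
    let f₃ : ℝ := q₄ * x ^ 2 + q₅ * x + q₆
    (G₂⁻¹ * G₁).trace = ((f₁ / f₂ : ℝ) : ℂ) ∧ (G₂⁻¹ * G₁).det = ((f₃ / f₂ : ℝ) : ℂ) := by
  intro S_R S_E G₁ G₂ p₁ p₂ p₃ q₁ q₂ q₃ q₄ q₅ q₆ f₁ f₂ f₃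
  have hG₁ := smul_one_add_sub_smul_add_det_smul_eq_gMatrix (a₁ : ℂ) b₁ (star b₁) c₁ x
  have hG₂ := smul_one_add_sub_smul_add_det_smul_eq_gMatrix (a₂ : ℂ) b₂ (star b₂) c₂ x
  have hnormSq₁ : b₁ * star b₁ = Complex.normSq b₁ := Complex.mul_conj b₁
  have hnormSq₂ : b₂ * star b₂ = Complex.normSq b₂ := Complex.mul_conj b₂
  have hcross : star b₁ * b₂ + b₁ * star b₂ = ((2 * ((starRingEnd ℂ) b₁ * b₂).re : ℝ) : ℂ) := by
    rw [← Complex.add_conj, map_mul, Complex.conj_conj, Complex.star_def]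
  simp only [G₁, G₂, S_R, S_E, Complex.ofReal_sub, Complex.ofReal_one, hG₁, hG₂,
    Matrix.trace_inv_mul_eq_div, Matrix.det_inv_mul_eq_div, trace_adjugate_gMatrix_mul_gMatrix,
    det_gMatrix]
  rw [hnormSq₁, hnormSq₂, hcross]
  constructor <;>
  · simp only [f₁, f₂, f₃, p₁, p₂, p₃, q₁, q₂, q₃, q₄, q₅, q₆]
    push_cast
    ring

theorem stmt_18 (a₁ c₁ a₂ c₂ x : ℝ) (b₁ b₂ : ℂ)
    (ha₁ : 0 ≤ a₁) (hc₁ : 0 ≤ c₁) (hb₁ : Complex.normSq b₁ ≤ a₁ * c₁)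
    (ha₂ : 0 ≤ a₂) (hc₂ : 0 ≤ c₂) (hb₂ : Complex.normSq b₂ ≤ a₂ * c₂)
    (hx : x ∈ Set.Ico (0:ℝ) 1) :
    let S_R : Matrix (Fin 2) (Fin 2) ℂ := !![(a₁ : ℂ), b₁; star b₁, (c₁ : ℂ)]
    let S_E : Matrix (Fin 2) (Fin 2) ℂ := !![(a₂ : ℂ), b₂; star b₂, (c₂ : ℂ)]
    let G₁ : Matrix (Fin 2) (Fin 2) ℂ :=
      (1 + (x : ℂ) * a₁) • 1 + ((1 - x : ℝ) : ℂ) • (S_R + ((x : ℂ) * S_R.det) • !![0, 0; 0, 1])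
    let G₂ : Matrix (Fin 2) (Fin 2) ℂ :=
      (1 + (x : ℂ) * a₂) • 1 + ((1 - x : ℝ) : ℂ) • (S_E + ((x : ℂ) * S_E.det) • !![0, 0; 0, 1])
    let p₁ : ℝ := -(2 * ((starRingEnd ℂ) b₁ * b₂).re)
      - (1 + a₁) * (a₂ * c₂ - Complex.normSq b₂) - (1 + a₂) * (a₁ * c₁ - Complex.normSq b₁)
    let p₂ : ℝ := 2 * (2 * ((starRingEnd ℂ) b₁ * b₂).re)
      + (1 + a₁) * (a₂ - c₂ + a₂ * c₂ - Complex.normSq b₂)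
      + (1 + a₂) * (a₁ - c₁ + a₁ * c₁ - Complex.normSq b₁)
    let p₃ : ℝ := (1 + a₁) * (1 + c₂) + (1 + a₂) * (1 + c₁) - 2 * ((starRingEnd ℂ) b₁ * b₂).re
    let q₁ : ℝ := -a₂ * (c₂ + a₂ * c₂ - Complex.normSq b₂)
    let q₂ : ℝ := a₂ - c₂ + a₂ ^ 2 + Complex.normSq b₂ + a₂ * (a₂ * c₂ - Complex.normSq b₂)
    let q₃ : ℝ := 1 + a₂ + c₂ + a₂ * c₂ - Complex.normSq b₂
    let q₄ : ℝ := -a₁ * (c₁ + a₁ * c₁ - Complex.normSq b₁)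
    let q₅ : ℝ := a₁ - c₁ + a₁ ^ 2 + Complex.normSq b₁ + a₁ * (a₁ * c₁ - Complex.normSq b₁)
    let q₆ : ℝ := 1 + a₁ + c₁ + a₁ * c₁ - Complex.normSq b₁
    let f₁ : ℝ := p₁ * x ^ 2 + p₂ * x + p₃
    let f₂ : ℝ := q₁ * x ^ 2 + q₂ * x + q₃
    let f₃ : ℝ := q₄ * x ^ 2 + q₅ * x + q₆
    (G₂⁻¹ * G₁).trace = ((f₁ / f₂ : ℝ) : ℂ) ∧ (G₂⁻¹ * G₁).det = ((f₃ / f₂ : ℝ) : ℂ) :=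
  stmt_18_general a₁ c₁ a₂ c₂ x b₁ b₂
end

section
/- Let f₂(x) = q₁x² + q₂x + q₃ with q₁ = −a(c + ac − |b|²), q₂ = a − c + a² + |b|² + a(ac − |b|²), q₃ = 1 + a + c + ac − |b|², where a, c ≥ 0 and ac ≥ |b|². Then f₂(x) = det((1+xa)I + (1−x)(S + x det(S) e₂e₂†)) > 0 for all x ∈ [0,1), where S = [[a,b],[b̄,c]]. -/
/-!
Writing `d = det S = ac - |b|²`, the matrix `G(x)` is the Hermitian matrix
`[[1 + a, (1 - x) b], [(1 - x) b̄, 1 + xa + (1 - x)(c + xd)]]`, so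
`det G(x) = (1 + a)(1 + xa + (1 - x)(c + xd)) - (1 - x)²|b|²`, which expands to `f₂(x)`.
For `0 ≤ x ≤ 1` the first product is at least `(1 + a)(1 + (1 - x)c) > (1 - x)ac`,
and `(1 - x)ac ≥ (1 - x)²ac ≥ (1 - x)²|b|²`.
-/

open Matrix

theorem det_fin_two_hermitian (p q : ℝ) (b : ℂ) :
    !![(p : ℂ), b; star b, (q : ℂ)].det = ((p * q - Complex.normSq b : ℝ) : ℂ) := by
  rw [det_fin_two_of, Complex.star_def, Complex.mul_conj]
  push_cast
  ring

theorem pencil_det_pos {a c n x : ℝ} (ha : 0 ≤ a) (hc : 0 ≤ c) (hn : n ≤ a * c)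
    (hx₀ : 0 ≤ x) (hx₁ : x ≤ 1) :
    0 < (1 + a) * (1 + x * a + (1 - x) * (c + x * (a * c - n))) - (1 - x) ^ 2 * n := by
  have hy : 0 ≤ 1 - x := by linarith
  have hdiag : 1 + (1 - x) * c ≤ 1 + x * a + (1 - x) * (c + x * (a * c - n)) := by
    nlinarith [mul_nonneg hx₀ ha, mul_nonneg hy (mul_nonneg hx₀ (sub_nonneg.2 hn))]
  have hoff : (1 - x) ^ 2 * n ≤ (1 - x) * (a * c) := by
    nlinarith [mul_le_mul_of_nonneg_left hn (sq_nonneg (1 - x)),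
      mul_nonneg (mul_nonneg hx₀ hy) (mul_nonneg ha hc)]
  nlinarith [mul_le_mul_of_nonneg_left hdiag (by linarith : (0:ℝ) ≤ 1 + a), mul_nonneg hy hc]

theorem stmt_19 (a c x : ℝ) (b : ℂ)
    (ha : 0 ≤ a) (hc : 0 ≤ c) (hb : Complex.normSq b ≤ a * c)
    (hx : x ∈ Set.Ico (0:ℝ) 1) :
    let S : Matrix (Fin 2) (Fin 2) ℂ := !![(a : ℂ), b; star b, (c : ℂ)]
    let G : Matrix (Fin 2) (Fin 2) ℂ :=
      (1 + (x : ℂ) * a) • 1 + ((1 - x : ℝ) : ℂ) • (S + ((x : ℂ) * S.det) • !![0, 0; 0, 1])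
    let q₁ : ℝ := -a * (c + a * c - Complex.normSq b)
    let q₂ : ℝ := a - c + a ^ 2 + Complex.normSq b + a * (a * c - Complex.normSq b)
    let q₃ : ℝ := 1 + a + c + a * c - Complex.normSq b
    G.det = ((q₁ * x ^ 2 + q₂ * x + q₃ : ℝ) : ℂ) ∧ 0 < q₁ * x ^ 2 + q₂ * x + q₃ := by
  intro S G q₁ q₂ q₃
  have hS : S.det = ((a * c - Complex.normSq b : ℝ) : ℂ) := det_fin_two_hermitian a c b
  have hG : G = !![((1 + a : ℝ) : ℂ), ((1 - x : ℝ) : ℂ) * b; star (((1 - x : ℝ) : ℂ) * b),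
      ((1 + x * a + (1 - x) * (c + x * (a * c - Complex.normSq b)) : ℝ) : ℂ)] := by
    simp only [G]
    rw [hS]
    ext i j
    fin_cases i <;> fin_cases j <;> simp [S]
    ring
  have hf : q₁ * x ^ 2 + q₂ * x + q₃ =
      (1 + a) * (1 + x * a + (1 - x) * (c + x * (a * c - Complex.normSq b)))
        - (1 - x) ^ 2 * Complex.normSq b := by
    ring
  refine ⟨?_, hf ▸ pencil_det_pos ha hc hb hx.1 hx.2.le⟩
  rw [hG, det_fin_two_hermitian, Complex.normSq_mul, Complex.normSq_ofReal, hf, sq]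
end
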